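/- Let I be a homogeneous ideal in ℂ[z₁,…,z_d] and set Z(I) = V(I) ∩ closed unit ball of ℂ^d. Let F : ℂ^d → ℂ^d be continuous on the closed unit ball and holomorphic on the open unit ball, such that F restricted to Z(I) is a bijection of Z(I) onto itself. If F(0) = 0 and for every z ∈ Z(I) the derivative at t = 0 of the map t ↦ F(t z) (t ∈ ℂ, |t| < 1) equals z, then F(z) = z for all z ∈ Z(I). -/

import Mathlib

open MvPolynomial Metric

noncomputable section

/-- `Cd d` is ℂ^d with the Euclidean (Hermitian) norm. -/
abbrev Cd (d : ℕ) := EuclideanSpace ℂ (Fin d)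

/-- The zero locus `V(I)` of an ideal of polynomials. -/
def VI {d : ℕ} (I : Ideal (MvPolynomial (Fin d) ℂ)) : Set (Cd d) :=
  {z | ∀ p ∈ I, eval (fun i => z i) p = 0}

/-- `Z(I) = V(I) ∩ closed unit ball`. -/
def ZI {d : ℕ} (I : Ideal (MvPolynomial (Fin d) ℂ)) : Set (Cd d) :=
  VI I ∩ Metric.closedBall 0 1

/-- An ideal is homogeneous if it contains the homogeneous components of each of
its elements. -/
def IsHomogeneousIdeal {d : ℕ} (I : Ideal (MvPolynomial (Fin d) ℂ)) : Prop :=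
  ∀ p ∈ I, ∀ n : ℕ, homogeneousComponent n p ∈ I

/-!
Since `I` is homogeneous, `Z(I)` is a balanced cone: with `z ∈ Z(I)`, every `t • z` with
`|t| ≤ 1` lies in `Z(I)`. For a unit vector `w ∈ Z(I)` the slice `g t = F (t • w)` therefore
maps the unit disc into the closed unit ball of the strictly convex space `ℂ^d`, with
`g 0 = 0` and `g' 0 = w` of norm one. The equality case of the Schwarz lemma forces
`g t = t • w` on the open disc, and continuity extends this to the closed disc. Every nonzero
`z ∈ Z(I)` is `‖z‖ • w` for such a `w`.
-/

open Set

lemma MvPolynomial.IsHomogeneous.eval_smul {σ R : Type*} [CommSemiring R]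
    {p : MvPolynomial σ R} {n : ℕ} (hp : p.IsHomogeneous n) (c : R) (x : σ → R) :
    eval (c • x) p = c ^ n * eval x p := by
  simp only [eval_eq, Finset.mul_sum]
  refine Finset.sum_congr rfl fun u hu => ?_
  have hdeg : ∑ i ∈ u.support, u i = n := by
    rw [← hp (mem_support_iff.mp hu), Finsupp.weight_apply, Finsupp.sum]
    simp
  simp only [Pi.smul_apply, smul_eq_mul, mul_pow, Finset.prod_mul_distrib,
    Finset.prod_pow_eq_pow_sum, hdeg]
  ring

lemma smul_mem_VI {d : ℕ} {I : Ideal (MvPolynomial (Fin d) ℂ)}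
    (hI : IsHomogeneousIdeal I) {z : Cd d} (hz : z ∈ VI I) (c : ℂ) : c • z ∈ VI I := by
  intro p hp
  rw [← sum_homogeneousComponent p, map_sum]
  refine Finset.sum_eq_zero fun n _ => ?_
  rw [show (fun i => (c • z) i) = c • fun i => z i from rfl,
    (homogeneousComponent_isHomogeneous n p).eval_smul, hz _ (hI p hp n), mul_zero]

lemma smul_mem_ZI {d : ℕ} {I : Ideal (MvPolynomial (Fin d) ℂ)}
    (hI : IsHomogeneousIdeal I) {z : Cd d} (hz : z ∈ ZI I) {c : ℂ} (hc : ‖c‖ ≤ 1) :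
    c • z ∈ ZI I := by
  refine ⟨smul_mem_VI hI hz.1 c, ?_⟩
  rw [mem_closedBall_zero_iff, norm_smul]
  exact mul_le_one₀ hc (norm_nonneg z) (mem_closedBall_zero_iff.mp hz.2)

/-- Equality case of the Schwarz lemma, extended to the closed disc by continuity. -/
lemma Complex.eqOn_closedBall_smul_of_hasDerivAt_zero {E : Type*} [NormedAddCommGroup E]
    [NormedSpace ℂ E] [StrictConvexSpace ℝ E] {g : ℂ → E} {v : E}
    (hc : ContinuousOn g (closedBall 0 1)) (hd : DifferentiableOn ℂ g (ball 0 1))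
    (hmaps : MapsTo g (ball 0 1) (closedBall 0 1)) (h0 : g 0 = 0)
    (hv : HasDerivAt g v 0) (hv1 : ‖v‖ = 1) :
    EqOn g (fun t => t • v) (closedBall 0 1) := by
  have hslope : dslope g 0 0 = v := by rw [dslope_same, hv.deriv]
  have hball : EqOn g (fun t => t • v) (ball 0 1) := by
    have := Complex.affine_of_mapsTo_ball_of_norm_dslope_eq_div hd (h0 ▸ hmaps)
      (mem_ball_self one_pos) (by rw [hslope, hv1, div_one])
    simpa [h0, hv.deriv] using this
  exact hball.of_subset_closure hc (continuous_id.smul continuous_const).continuousOn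
    ball_subset_closedBall (closure_ball 0 one_ne_zero).ge

lemma apply_smul_eq_smul_of_norm_eq_one {d : ℕ} {I : Ideal (MvPolynomial (Fin d) ℂ)}
    (hI : IsHomogeneousIdeal I) {F : Cd d → Cd d}
    (hFc : ContinuousOn F (closedBall 0 1)) (hFh : DifferentiableOn ℂ F (ball 0 1))
    (hF : MapsTo F (ZI I) (ZI I)) (hF0 : F 0 = 0)
    {w : Cd d} (hw : w ∈ ZI I) (hw1 : ‖w‖ = 1)
    (hderiv : HasDerivAt (fun t : ℂ => F (t • w)) w 0)
    {t : ℂ} (ht : ‖t‖ ≤ 1) : F (t • w) = t • w := by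
  have hnorm (s : ℂ) : ‖s • w‖ = ‖s‖ := by rw [norm_smul, hw1, mul_one]
  have hline : Continuous fun s : ℂ => s • w := continuous_id.smul continuous_const
  refine Complex.eqOn_closedBall_smul_of_hasDerivAt_zero
    (hFc.comp hline.continuousOn fun s hs => by simpa [hnorm] using hs)
    (hFh.comp (differentiable_id.smul_const w).differentiableOn
      fun s hs => by simpa [hnorm] using hs)
    (fun s hs => (hF (smul_mem_ZI hI hw (mem_ball_zero_iff.mp hs).le)).2)
    (by simp [hF0]) hderiv hw1 (mem_closedBall_zero_iff.mpr ht)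

/-- a Cartan-type uniqueness theorem. Let `F` be continuous on the
closed unit ball, holomorphic on the open unit ball, restricting to a bijection of
`Z(I)` onto itself.  If `F(0) = 0` and for every `z ∈ Z(I)` the map `t ↦ F(t z)`
has derivative `z` at `t = 0`, then `F` is the identity on `Z(I)`. -/
theorem stmt4 {d : ℕ} (I : Ideal (MvPolynomial (Fin d) ℂ))
    (hI : IsHomogeneousIdeal I)
    (F : Cd d → Cd d)
    (hFc : ContinuousOn F (Metric.closedBall 0 1))
    (hFh : DifferentiableOn ℂ F (Metric.ball 0 1))
    (hFbij : Set.BijOn F (ZI I) (ZI I))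
    (hF0 : F 0 = 0)
    (hderiv : ∀ z ∈ ZI I, HasDerivAt (fun t : ℂ => F (t • z)) z 0) :
    ∀ z ∈ ZI I, F z = z := by
  intro z hz
  rcases eq_or_ne z 0 with rfl | hz0
  · exact hF0
  set w : Cd d := (‖z‖ : ℂ)⁻¹ • z
  have hz0' : (‖z‖ : ℂ) ≠ 0 := by simpa using hz0
  have hw1 : ‖w‖ = 1 := by
    rw [norm_smul, norm_inv, Complex.norm_real, norm_norm,
      inv_mul_cancel₀ (norm_ne_zero_iff.mpr hz0)]
  have hwZ : w ∈ ZI I := ⟨smul_mem_VI hI hz.1 _, mem_closedBall_zero_iff.mpr hw1.le⟩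
  have hzw : z = (‖z‖ : ℂ) • w := by rw [smul_smul, mul_inv_cancel₀ hz0', one_smul]
  rw [hzw]
  exact apply_smul_eq_smul_of_norm_eq_one hI hFc hFh hFbij.mapsTo hF0 hwZ hw1
    (hderiv w hwZ) (by simpa using mem_closedBall_zero_iff.mp hz.2)
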